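/- arXiv:2205.08715 — 2 statements merged into one kernel-verified Lean document; each statement's English description precedes it below -/
import Mathlib

section
/- Restricting thresholds to [ε, 1/ε] loses at most a (1+ε) factor: for any probability distribution K on ℝ⁺ and 0 < ε < 1, min_{θ ∈ [ε, 1/ε]} E_{y∼K}[g(θ, y)] ≤ (1+ε) · inf_{θ > 0} E_{y∼K}[g(θ, y)]. -/
open MeasureTheory

noncomputable def g (θ y : ℝ) : ℝ :=
  if θ ≤ y then (1 + θ) / min 1 y else y / min 1 y

lemma div_min_nonneg (y : ℝ) : 0 ≤ y / min 1 y := by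
  rcases lt_trichotomy y 0 with h | h | h
  · rw [min_eq_right (by linarith), div_self h.ne]; norm_num
  · simp [h]
  · exact div_nonneg h.le (le_min zero_le_one h.le)

lemma g_nonneg {θ : ℝ} (hθ : 0 < θ) (y : ℝ) : 0 ≤ g θ y := by
  unfold g
  split
  · rename_i h
    have hy : 0 < y := lt_of_lt_of_le hθ h
    exact div_nonneg (by linarith) (le_min zero_le_one hy.le)
  · exact div_min_nonneg y

-- case θstar < ε
lemma pw_low {ε θstar : ℝ} (hε0 : 0 < ε) (hε1 : ε < 1) (hθ : 0 < θstar)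
    (hlt : θstar < ε) (y : ℝ) : g ε y ≤ (1 + ε) * g θstar y := by
  unfold g
  by_cases h1 : ε ≤ y
  · have h2 : θstar ≤ y := le_trans hlt.le h1
    rw [if_pos h1, if_pos h2]
    have hm : 0 < min 1 y := lt_min one_pos (lt_of_lt_of_le hε0 h1)
    rw [← mul_div_assoc, div_le_div_iff₀ hm hm]
    nlinarith [mul_le_mul_of_nonneg_right (show (1+ε) ≤ (1+ε)*(1+θstar) by nlinarith) hm.le]
  · rw [if_neg h1]
    by_cases h2 : θstar ≤ y
    · rw [if_pos h2]
      have hy : 0 < y := lt_of_lt_of_le hθ h2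
      have hm : 0 < min 1 y := lt_min one_pos hy
      rw [← mul_div_assoc, div_le_div_iff₀ hm hm]
      have hy1 : y < ε := not_le.mp h1
      nlinarith [mul_le_mul_of_nonneg_right (show y ≤ (1+ε)*(1+θstar) by nlinarith) hm.le]
    · rw [if_neg h2]
      nlinarith [div_min_nonneg y]

-- case θstar > 1/ε
lemma pw_high {ε θstar : ℝ} (hε0 : 0 < ε) (hε1 : ε < 1) (hθ : 0 < θstar)
    (hgt : 1 / ε < θstar) (y : ℝ) : g (1 / ε) y ≤ (1 + ε) * g θstar y := by
  have hinv : 1 < 1 / ε := by rw [lt_div_iff₀ hε0]; linarith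
  unfold g
  by_cases h1 : 1 / ε ≤ y
  · have hy1 : 1 < y := lt_of_lt_of_le hinv h1
    have hm : min 1 y = 1 := min_eq_left hy1.le
    rw [if_pos h1, hm]
    by_cases h2 : θstar ≤ y
    · rw [if_pos h2]
      have h3 : (1:ℝ) ≤ 1 / ε := hinv.le
      rw [div_one, div_one]; nlinarith
    · rw [if_neg h2, div_one, div_one]
      have h4 : (1 + ε) * (1 / ε) = 1 / ε + 1 := by field_simp
      nlinarith [mul_le_mul_of_nonneg_left h1 (by linarith : (0:ℝ) ≤ 1 + ε)]
  · rw [if_neg h1, if_neg (by push_neg at h1 ⊢; linarith)]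
    nlinarith [div_min_nonneg y]

theorem restrict_theta
    (K : Measure ℝ) [IsProbabilityMeasure K] (ε θstar : ℝ)
    (hε0 : 0 < ε) (hε1 : ε < 1) (hθstar : 0 < θstar)
    (hint : ∀ θ ∈ Set.Icc ε (1 / ε), Integrable (fun y => g θ y) K)
    (hintstar : Integrable (fun y => g θstar y) K)
    (hopt : ∀ θ : ℝ, 0 < θ → (∫ y, g θstar y ∂K) ≤ ∫ y, g θ y ∂K) :
    ∃ θ ∈ Set.Icc ε (1 / ε),
      (∫ y, g θ y ∂K) ≤ (1 + ε) * ∫ y, g θstar y ∂K := by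
  have hεle : ε ≤ 1 / ε := by rw [le_div_iff₀ hε0]; nlinarith
  have hmemε : ε ∈ Set.Icc ε (1 / ε) := ⟨le_refl _, hεle⟩
  have hmeminv : (1 / ε) ∈ Set.Icc ε (1 / ε) := ⟨hεle, le_refl _⟩
  rcases lt_or_ge θstar ε with hlo | hge
  · refine ⟨ε, hmemε, ?_⟩
    calc ∫ y, g ε y ∂K ≤ ∫ y, (1 + ε) * g θstar y ∂K :=
          integral_mono (hint ε hmemε) (hintstar.const_mul _)
            (fun y => pw_low hε0 hε1 hθstar hlo y)
      _ = (1 + ε) * ∫ y, g θstar y ∂K := integral_const_mul _ _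
  rcases lt_or_ge (1 / ε) θstar with hhi | hle
  · refine ⟨1 / ε, hmeminv, ?_⟩
    calc ∫ y, g (1 / ε) y ∂K ≤ ∫ y, (1 + ε) * g θstar y ∂K :=
          integral_mono (hint _ hmeminv) (hintstar.const_mul _)
            (fun y => pw_high hε0 hε1 hθstar hhi y)
      _ = (1 + ε) * ∫ y, g θstar y ∂K := integral_const_mul _ _
  · refine ⟨θstar, ⟨hge, hle⟩, ?_⟩
    have hpos : 0 ≤ ∫ y, g θstar y ∂K :=
      integral_nonneg (fun y => g_nonneg hθstar y)
    nlinarith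
end

section
/- Two-point lower bound for ski rental: suppose y is uniformly distributed on {1−4ε, 1+4ε} for small enough ε > 0 (e.g., ε < 1/8). Then for every threshold θ > 0, E_y[g(θ, y)] ≥ 1 + 2ε. Moreover the two dominant strategies achieve: buying immediately (θ → 0) gives expected ratio (1/2)(1/(1−4ε)) + (1/2)·1 > 1 + 2ε, and renting throughout (θ ≥ 1+4ε) gives expected ratio (1/2)·1 + (1/2)(1+4ε) = 1 + 2ε. -/
theorem two_point_lower_bound (ε : ℝ) (hε0 : 0 < ε) (hε1 : ε < 1 / 8) :
    (∀ θ : ℝ, 0 < θ →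
        (1 / 2) * g θ (1 - 4 * ε) + (1 / 2) * g θ (1 + 4 * ε) ≥ 1 + 2 * ε) ∧
    ((1 / 2) * (1 / (1 - 4 * ε)) + (1 / 2) * 1 > 1 + 2 * ε) ∧
    (∀ θ : ℝ, 1 + 4 * ε < θ →
        (1 / 2) * g θ (1 - 4 * ε) + (1 / 2) * g θ (1 + 4 * ε) = 1 + 2 * ε) := by
  have ha : (0:ℝ) < 1 - 4 * ε := by linarith
  have hmin1 : min (1:ℝ) (1 - 4 * ε) = 1 - 4 * ε := min_eq_right (by linarith)
  have hmin2 : min (1:ℝ) (1 + 4 * ε) = 1 := min_eq_left (by linarith)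
  have hinv : 1 + 4 * ε ≤ 1 / (1 - 4 * ε) := by
    rw [le_div_iff₀ ha]; nlinarith
  refine ⟨?_, ?_, ?_⟩
  · intro θ hθ
    unfold g
    rw [hmin1, hmin2]
    split_ifs with h1 h2 h2
    · have hd : (1:ℝ) / (1 - 4 * ε) ≤ (1 + θ) / (1 - 4 * ε) := by
        gcongr; linarith
      linarith
    · exfalso; linarith
    · rw [div_self (ne_of_gt ha), div_one]
      linarith
    · rw [div_self (ne_of_gt ha), div_one]
      push_neg at h2
      linarith
  · have : 1 + 4 * ε < 1 / (1 - 4 * ε) := by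
      rw [lt_div_iff₀ ha]; nlinarith
    linarith
  · intro θ hθ
    unfold g
    rw [hmin1, hmin2]
    rw [if_neg (by linarith), if_neg (by linarith)]
    rw [div_self (ne_of_gt ha), div_one]
    ring
end
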